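/- Let u : ℤ → A be a bi-infinite sequence and w a finite word over A of length p. Suppose there exist f ∈ ℝ and C > 0 such that the partial sums α(n) = Σ_{k=0}^{n-1} (𝟙[w occurs in u at position k] - f) satisfy |α(n)| ≤ C for all n ∈ ℤ. Then every length-n factor of u contains between n·f - 2C - p and n·f + 2C + p occurrences of w. -/
import Mathlib


/-- Number of (possibly overlapping) occurrences of the word `w` in `v`. -/
def occCount {A : Type*} [DecidableEq A] (w v : List A) : ℕ :=
  ((List.range v.length).filter (fun i => (v.drop i).take w.length = w)).length

/-- If the partial sums `α(n) = Σ_{k<n} (𝟙[w occurs in u at k] - f)` are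
bounded by `C > 0`, then every length-`n` factor of `u` contains between
`n·f - 2C - p` and `n·f + 2C + p` occurrences of the word `w` (of length `p`). -/
theorem stmt17 {A : Type*} [Fintype A] [DecidableEq A] (u : ℤ → A)
    (w : List A) (p : ℕ) (hw : w.length = p) (hp : 1 ≤ p)
    (f C : ℝ) (hC : 0 < C) (α : ℤ → ℝ) (hα0 : α 0 = 0)
    (hαrec : ∀ n : ℤ, α (n + 1) = α n +
      ((if (List.range p).map (fun j => u (n + j)) = w then (1 : ℝ) else 0) - f))
    (hbd : ∀ n : ℤ, |α n| ≤ C) :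
    ∀ (m : ℤ) (n : ℕ),
      (n : ℝ) * f - 2 * C - p ≤ (occCount w ((List.range n).map (fun k => u (m + k))) : ℝ) ∧
      (occCount w ((List.range n).map (fun k => u (m + k))) : ℝ) ≤ (n : ℝ) * f + 2 * C + p := by
  simp only [bind_pure_comp, List.map_eq_map, List.map_map, Function.comp_def] at hαrec ⊢
  intro m n
  set g : ℤ → ℝ := fun k =>
    if List.map (fun j : ℕ => u (k + (j : ℤ))) (List.range p) = w then (1:ℝ) else 0 with hg
  have hg0 : ∀ k, 0 ≤ g k := by intro k; simp only [hg]; positivity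
  have hg1 : ∀ k, g k ≤ 1 := by intro k; simp only [hg]; split <;> norm_num
  have htel : ∀ (a : ℤ) (k : ℕ),
      α (a + k) = α a + (∑ j ∈ Finset.range k, g (a + j)) - k * f := by
    intro a k
    induction k with
    | zero => simp
    | succ k ih =>
      have h1 : (a + ((k : ℕ) + 1 : ℕ) : ℤ) = (a + k) + 1 := by push_cast; ring
      rw [h1, hαrec, ih, Finset.sum_range_succ]
      simp only [hg]; push_cast; ring
  set S := ∑ j ∈ Finset.range n, g (m + j) with hSdef
  have hS : S = α (m + n) - α m + n * f := by
    have := htel m n; linarith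
  have hb1 := abs_le.mp (hbd (m + n))
  have hb2 := abs_le.mp (hbd m)
  have hSlo : (n:ℝ) * f - 2*C ≤ S := by linarith [hb1.1, hb2.2]
  have hShi : S ≤ (n:ℝ) * f + 2*C := by linarith [hb1.2, hb2.1]
  set v : List A := (List.range n).map (fun k : ℕ => u (m + (k : ℤ))) with hv
  have hvlen : v.length = n := by simp [hv]
  have hkey : ∀ i : ℕ, i + p ≤ n →
      (v.drop i).take p = (List.range p).map (fun j : ℕ => u (m + (i : ℤ) + (j : ℤ))) := by
    intro i hi
    apply List.ext_getElem
    · simp [hv]; omega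
    · intro k h1 h2
      simp only [hv, List.getElem_take, List.getElem_drop, List.getElem_map,
        List.getElem_range]
      congr 1
      push_cast; ring
  have hlen : ∀ i : ℕ, i < n → ¬ (i + p ≤ n) → ¬ ((v.drop i).take p = w) := by
    intro i hi hip h
    have := congrArg List.length h
    simp [hv, hw] at this
    omega
  have hQ : ∀ i ∈ Finset.range n,
      ((v.drop i).take w.length = w) ↔
        (i + p ≤ n ∧ (List.range p).map (fun j : ℕ => u (m + (i : ℤ) + (j : ℤ))) = w) := by
    intro i hi
    rw [Finset.mem_range] at hi
    rw [hw]
    constructor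
    · intro h
      have hip : i + p ≤ n := by
        by_contra hc
        exact hlen i hi hc h
      exact ⟨hip, by rw [← hkey i hip]; exact h⟩
    · rintro ⟨hip, h⟩
      rw [hkey i hip]; exact h
  have hocc : (occCount w v : ℝ) =
      ∑ i ∈ Finset.range n, (if i + p ≤ n then g (m + i) else 0) := by
    have e1 : occCount w v =
        ((Finset.range n).filter (fun i => (v.drop i).take w.length = w)).card := by
      rw [occCount, hvlen]
      simp [Finset.filter, Finset.range, Finset.card, Multiset.range]
    have e2 : ((Finset.range n).filter (fun i => (v.drop i).take w.length = w)) =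
        ((Finset.range n).filter (fun i =>
          i + p ≤ n ∧ (List.range p).map (fun j : ℕ => u (m + (i : ℤ) + (j : ℤ))) = w)) :=
      Finset.filter_congr hQ
    rw [e1, e2, Finset.card_filter]
    push_cast
    apply Finset.sum_congr rfl
    intro i _
    simp only [hg]
    by_cases hA : i + p ≤ n <;>
      by_cases hB : (List.range p).map (fun j : ℕ => u (m + (i : ℤ) + (j : ℤ))) = w <;>
      simp [hA, hB, add_assoc]
  set T := ∑ i ∈ Finset.range n, (if i + p ≤ n then g (m + i) else 0) with hT
  have hTS : T ≤ S := by
    apply Finset.sum_le_sum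
    intro i _
    split
    · exact le_rfl
    · exact hg0 _
  have hST : S - T ≤ (p : ℝ) := by
    have h1 : S - T = ∑ i ∈ Finset.range n, (if i + p ≤ n then 0 else g (m + i)) := by
      rw [hSdef, hT, ← Finset.sum_sub_distrib]
      apply Finset.sum_congr rfl; intro i _; split <;> ring
    have h2 : ∑ i ∈ Finset.range n, (if i + p ≤ n then (0:ℝ) else g (m + i)) ≤
        ∑ i ∈ Finset.range n, (if n < i + p then (1:ℝ) else 0) := by
      apply Finset.sum_le_sum
      intro i _
      by_cases hA : i + p ≤ n
      · simp [hA, Nat.not_lt.mpr hA]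
      · simp [hA, Nat.lt_of_not_le hA]; exact hg1 _
    have h3 : ∑ i ∈ Finset.range n, (if n < i + p then (1:ℝ) else 0) =
        ((Finset.range n).filter (fun i => n < i + p)).card := by
      rw [Finset.sum_boole]
    have h4 : ((Finset.range n).filter (fun i => n < i + p)).card ≤ p := by
      calc ((Finset.range n).filter (fun i => n < i + p)).card
          ≤ (Finset.Ico (n - p) n).card := by
            apply Finset.card_le_card
            intro i hi
            simp only [Finset.mem_filter, Finset.mem_range, Finset.mem_Ico] at *
            omega
        _ ≤ p := by rw [Nat.card_Ico]; omega
    have h4' : (((Finset.range n).filter (fun i => n < i + p)).card : ℝ) ≤ p := by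
      exact_mod_cast h4
    linarith
  constructor
  · rw [hocc]; linarith
  · rw [hocc]; linarith
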